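/- For all integers r, n with 1 ≤ r < n, the set LE(n) ∩ (n!/(r+1), n!] is equal to the set { (n!/r!)·ℓ : ℓ ∈ LE(r) ∩ (r!/(r+1), r!] }. -/

import Mathlib

/-- The number of linear extensions of a finite poset `P`: the number of
order-preserving bijections from `P` to the chain `Fin |P|`. -/
noncomputable def extNum (P : Type*) [instF : Fintype P] [instO : PartialOrder P] : ℕ :=
  Nat.card {f : P ≃ Fin (Fintype.card P) // ∀ x y : P, x ≤ y → f x ≤ f y}

/-- `LEset n` is the set of positive integers arising as the number of linear
extensions of some poset with exactly `n` elements. -/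
def LEset (n : ℕ) : Set ℕ :=
  {m | 0 < m ∧ ∃ r : PartialOrder (Fin n), extNum (Fin n) (instO := r) = m}

/-!
Adding an isolated point to a poset on `k` elements multiplies its number of linear extensions
by `k + 1`; iterating this gives `⊇`. Conversely, a poset on `n` elements without isolated
points has at most `n! / n` linear extensions: a connected one because the `n` cyclic shifts of
its linear extensions are distinct bijections onto `Fin n`, a disconnected one by induction,
using `e(A ⊕ B) = C(a + b, a) e(A) e(B)`. Hence a poset on `n > r` elements with more than
`n! / (r + 1)` linear extensions has an isolated point, and removing it recursively down to `r`
elements gives `⊆`.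
-/

open Finset Function
open scoped Nat

abbrev LinExt (α : Type*) [Fintype α] [Preorder α] : Type _ :=
  {f : α → Fin (Fintype.card α) // Injective f ∧ Monotone f}

section Basic

variable {α β : Type*} [Fintype α] [PartialOrder α] [Fintype β] [PartialOrder β]

lemma extNum_le_factorial : extNum α ≤ (Fintype.card α)! := by
  classical
  calc extNum α ≤ Nat.card (α ≃ Fin (Fintype.card α)) :=
        Nat.card_le_card_of_injective _ Subtype.val_injective
    _ = (Fintype.card α)! := by
        rw [Nat.card_eq_fintype_card, Fintype.card_equiv (Fintype.equivFin α)]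

lemma extNum_pos : 0 < extNum α := by
  let : Fintype (LinearExtension α) := ‹Fintype α›
  let e := monoEquivOfFin (LinearExtension α) rfl
  rw [extNum, Nat.card_pos_iff]
  exact ⟨⟨⟨e.symm.toEquiv, fun x y hxy => e.symm.monotone
    (toLinearExtension.monotone hxy)⟩⟩, inferInstance⟩

lemma extNum_eq_one [Subsingleton α] : extNum α = 1 := by
  have h := extNum_le_factorial (α := α)
  rw [Nat.factorial_eq_one.2 (Fintype.card_le_one_iff_subsingleton.2 ‹_›)] at h
  exact le_antisymm h extNum_pos

lemma extNum_congr (e : α ≃o β) : extNum α = extNum β := by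
  have hc : Fintype.card α = Fintype.card β := Fintype.card_congr e.toEquiv
  refine Nat.card_congr (Equiv.subtypeEquiv (e.toEquiv.equivCongr (finCongr hc)) fun f => ?_)
  simp only [Equiv.equivCongr_apply_apply, finCongr_apply, Fin.le_def, Fin.val_cast]
  refine ⟨fun hf x y hxy => hf _ _ (e.symm.monotone hxy), fun hf x y hxy => ?_⟩
  simpa using hf (e x) (e y) (e.monotone hxy)

lemma extNum_eq_natCard_linExt : extNum α = Nat.card (LinExt α) :=
  Nat.card_congr
    { toFun := fun f => ⟨f.1, f.1.injective, fun x y => f.2 x y⟩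
      invFun := fun f => ⟨Equiv.ofBijective f.1 ((Fintype.bijective_iff_injective_and_card _).2
        ⟨f.2.1, (Fintype.card_fin _).symm⟩), fun x y => @f.2.2 x y⟩
      left_inv := fun _ => Subtype.ext (Equiv.ext fun _ => rfl)
      right_inv := fun _ => rfl }

end Basic

lemma Monotone.sumElim {α β γ : Type*} [Preorder α] [Preorder β] [Preorder γ] {f : α → γ}
    {g : β → γ} (hf : Monotone f) (hg : Monotone g) : Monotone (Sum.elim f g) := by
  rintro (a | a) (b | b) h
  · exact hf (Sum.inl_le_inl_iff.1 h)
  · exact absurd h Sum.not_inl_le_inr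
  · exact absurd h Sum.not_inr_le_inl
  · exact hg (Sum.inr_le_inr_iff.1 h)

lemma image_orderEmbOfFin_comp {α : Type*} [Fintype α] {n k : ℕ} {T : Finset (Fin n)}
    (hT : T.card = k) {g : α → Fin k} (hg : Injective g) (hα : Fintype.card α = k) :
    univ.image (T.orderEmbOfFin hT ∘ g) = T := by
  refine eq_of_subset_of_card_le (fun _ hj => ?_) ?_
  · obtain ⟨x, -, rfl⟩ := mem_image.1 hj
    exact orderEmbOfFin_mem _ _ _
  · rw [card_image_of_injective _ ((T.orderEmbOfFin hT).injective.comp hg), card_univ, hα, hT]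

lemma exists_orderEmbOfFin_comp_eq {α : Type*} [Preorder α] {n k : ℕ} (T : Finset (Fin n))
    (hT : T.card = k) {u : α → Fin n} (hu : Injective u) (hum : Monotone u) (huT : ∀ x, u x ∈ T) :
    ∃ g : α → Fin k, Injective g ∧ Monotone g ∧ T.orderEmbOfFin hT ∘ g = u := by
  refine ⟨fun x => (T.orderIsoOfFin hT).symm ⟨u x, huT x⟩, fun x y hxy => hu ?_,
    fun x y hxy => (T.orderIsoOfFin hT).symm.monotone (Subtype.mk_le_mk.2 (hum hxy)), ?_⟩
  · simpa using hxy
  · funext x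
    simp [← coe_orderIsoOfFin_apply]

section Interleave

variable {α β : Type*} [Fintype α] [Fintype β]

/-- The positions at which a linear extension of `α ⊕ β` places `α`. -/
abbrev Positions (α β : Type*) [Fintype α] [Fintype β] : Type :=
  {T : Finset (Fin (Fintype.card (α ⊕ β))) // T.card = Fintype.card α}

lemma Positions.card_compl (T : Positions α β) : T.1ᶜ.card = Fintype.card β := by
  rw [Finset.card_compl, T.2, Fintype.card_fin, Fintype.card_sum, Nat.add_sub_cancel_left]

def Positions.interleave (T : Positions α β) (g : α → Fin (Fintype.card α))
    (h : β → Fin (Fintype.card β)) : α ⊕ β → Fin (Fintype.card (α ⊕ β)) :=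
  Sum.elim (T.1.orderEmbOfFin T.2 ∘ g) (T.1ᶜ.orderEmbOfFin T.card_compl ∘ h)

lemma Positions.interleave_injective (T : Positions α β) {g : α → Fin (Fintype.card α)}
    {h : β → Fin (Fintype.card β)} (hg : Injective g) (hh : Injective h) :
    Injective (T.interleave g h) :=
  ((T.1.orderEmbOfFin T.2).injective.comp hg).sumElim
    ((T.1ᶜ.orderEmbOfFin T.card_compl).injective.comp hh) fun x y hxy =>
      mem_compl.1 (orderEmbOfFin_mem _ _ (h y))
        ((show T.1.orderEmbOfFin T.2 (g x) = _ from hxy) ▸ orderEmbOfFin_mem _ _ _)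

variable [Preorder α] [Preorder β]

lemma Positions.interleave_monotone (T : Positions α β) {g : α → Fin (Fintype.card α)}
    {h : β → Fin (Fintype.card β)} (hg : Monotone g) (hh : Monotone h) :
    Monotone (T.interleave g h) :=
  ((T.1.orderEmbOfFin T.2).monotone.comp hg).sumElim
    ((T.1ᶜ.orderEmbOfFin T.card_compl).monotone.comp hh)

def interleaveLinExt (p : Positions α β × LinExt α × LinExt β) : LinExt (α ⊕ β) :=
  ⟨p.1.interleave p.2.1 p.2.2, p.1.interleave_injective p.2.1.2.1 p.2.2.2.1,
    p.1.interleave_monotone p.2.1.2.2 p.2.2.2.2⟩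

lemma interleaveLinExt_injective : Injective (interleaveLinExt (α := α) (β := β)) := by
  rintro ⟨T, g, h⟩ ⟨T', g', h'⟩ heq
  have hF : T.interleave g h = T'.interleave g' h' := congrArg Subtype.val heq
  obtain rfl : T = T' := Subtype.ext <| by
    rw [← image_orderEmbOfFin_comp T.2 g.2.1 rfl, ← image_orderEmbOfFin_comp T'.2 g'.2.1 rfl]
    exact congrArg (fun F => univ.image (F ∘ Sum.inl)) hF
  obtain rfl : g = g' := Subtype.ext <| funext fun x =>
    (T.1.orderEmbOfFin T.2).injective (congrFun hF (Sum.inl x))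
  obtain rfl : h = h' := Subtype.ext <| funext fun y =>
    (T.1ᶜ.orderEmbOfFin T.card_compl).injective (congrFun hF (Sum.inr y))
  rfl

lemma interleaveLinExt_surjective : Surjective (interleaveLinExt (α := α) (β := β)) := by
  rintro ⟨f, hfi, hfm⟩
  let T : Positions α β := ⟨univ.image (f ∘ Sum.inl),
    by rw [card_image_of_injective _ (hfi.comp Sum.inl_injective), card_univ]⟩
  obtain ⟨g, hgi, hgm, hg⟩ := exists_orderEmbOfFin_comp_eq T.1 T.2 (hfi.comp Sum.inl_injective)
    (hfm.comp Sum.inl_mono) fun x => mem_image_of_mem _ (mem_univ x)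
  obtain ⟨h, hhi, hhm, hh⟩ := exists_orderEmbOfFin_comp_eq T.1ᶜ T.card_compl
    (hfi.comp Sum.inr_injective) (hfm.comp Sum.inr_mono) fun y => by
      simp only [T, mem_compl, mem_image, mem_univ, true_and, comp_apply, not_exists]
      exact fun x hxy => Sum.inl_ne_inr (hfi hxy)
  refine ⟨⟨T, ⟨g, hgi, hgm⟩, ⟨h, hhi, hhm⟩⟩, Subtype.ext (funext ?_)⟩
  rintro (x | y)
  · exact congrFun hg x
  · exact congrFun hh y

end Interleave

theorem extNum_sum {α β : Type*} [Fintype α] [PartialOrder α] [Fintype β] [PartialOrder β] :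
    extNum (α ⊕ β) =
      (Fintype.card α + Fintype.card β).choose (Fintype.card α) * extNum α * extNum β := by
  rw [extNum_eq_natCard_linExt, extNum_eq_natCard_linExt, extNum_eq_natCard_linExt,
    ← Nat.card_eq_of_bijective _ ⟨interleaveLinExt_injective, interleaveLinExt_surjective⟩,
    Nat.card_prod, Nat.card_prod, Nat.card_eq_fintype_card, Fintype.card_finset_len,
    Fintype.card_fin, Fintype.card_sum, mul_assoc]

section Components

variable {α : Type*} [Fintype α] [PartialOrder α] {S : Set α}

/-- A set that is both upper and lower is a union of connected components of the comparability
graph. -/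
def sumComplOrderIso [DecidablePred (· ∈ S)] (hu : IsUpperSet S) (hl : IsLowerSet S) :
    S ⊕ ↥Sᶜ ≃o α where
  toEquiv := Equiv.Set.sumCompl S
  map_rel_iff' := by
    rintro (⟨a, ha⟩ | ⟨a, ha⟩) (⟨b, hb⟩ | ⟨b, hb⟩)
    · simp
    · simpa using fun hab => hb (hu hab ha)
    · simpa using fun hab => ha (hl hab hb)
    · simp

theorem extNum_eq_choose_mul [Fintype S] [Fintype ↥Sᶜ] (hu : IsUpperSet S) (hl : IsLowerSet S) :
    extNum α = (Fintype.card α).choose (Fintype.card S) * extNum S * extNum ↥Sᶜ := by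
  classical
  rw [← extNum_congr (sumComplOrderIso hu hl), extNum_sum,
    ← Fintype.card_congr (Equiv.Set.sumCompl S), Fintype.card_sum]

theorem extNum_eq_card_mul [DecidableEq α] {x : α} (hmin : IsMin x) (hmax : IsMax x) :
    extNum α = Fintype.card α * extNum ({x}ᶜ : Set α) := by
  have hu : IsUpperSet ({x} : Set α) := fun a b hab ha => by
    subst ha; exact (hmax.eq_of_le hab).symm
  have hl : IsLowerSet ({x} : Set α) := fun a b hab ha => by
    subst ha; exact (hmin.eq_of_ge hab).symm
  rw [extNum_eq_choose_mul hu hl, extNum_eq_one, Set.card_singleton, Nat.choose_one_right,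
    mul_one]

end Components

/-- The elements that the shift by `d` does not wrap around form a union of components. -/
lemma exists_isUpperSet_isLowerSet_of_eq_add {α : Type*} [Preorder α] {n : ℕ} [NeZero n]
    {f g : α → Fin n} (hf : Monotone f) (hg : Monotone g) (hfs : Surjective f) {d : Fin n}
    (hd : d ≠ 0) (hgf : ∀ x, g x = f x + d) :
    ∃ S : Set α, IsUpperSet S ∧ IsLowerSet S ∧ S.Nonempty ∧ Sᶜ.Nonempty := by
  have hd0 : 0 < (d : ℕ) := Nat.pos_of_ne_zero (Fin.val_ne_iff.2 hd)
  have hdn := d.isLt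
  refine ⟨{x | (f x : ℕ) + d < n}, fun a b hab ha => ?_, fun a b hba ha => ?_, ?_, ?_⟩
  · by_contra hb
    have hgab : (g a : ℕ) ≤ g b := hg hab
    have hfb := (f b).isLt
    simp only [Set.mem_ofPred_eq, not_lt] at ha hb
    rw [hgf, hgf, Fin.val_add_eq_ite, Fin.val_add_eq_ite, if_neg (by omega), if_pos hb] at hgab
    omega
  · have hfba : (f b : ℕ) ≤ f a := hf hba
    simp only [Set.mem_ofPred_eq] at ha ⊢
    omega
  · obtain ⟨x, hx⟩ := hfs ⟨0, by omega⟩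
    exact ⟨x, by simp [hx, hdn]⟩
  · obtain ⟨x, hx⟩ := hfs ⟨n - 1, by omega⟩
    exact ⟨x, by simp only [Set.mem_compl_iff, Set.mem_ofPred_eq, hx]; omega⟩

lemma isMin_coe_of_isLowerSet {α : Type*} [Preorder α] {S : Set α} (hS : IsLowerSet S) {x : S}
    (hx : IsMin x) : IsMin (x : α) :=
  fun b hb => hx (b := ⟨b, hS hb x.2⟩) hb

lemma isMax_coe_of_isUpperSet {α : Type*} [Preorder α] {S : Set α} (hS : IsUpperSet S) {x : S}
    (hx : IsMax x) : IsMax (x : α) :=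
  fun b hb => hx (b := ⟨b, hS hb x.2⟩) hb

lemma one_lt_card_of_not_isMin_and_isMax {α : Type*} [Fintype α] [Preorder α] [Nonempty α]
    (h : ∀ x : α, ¬ (IsMin x ∧ IsMax x)) : 1 < Fintype.card α := by
  by_contra! hle
  have := Fintype.card_le_one_iff_subsingleton.1 hle
  obtain ⟨x⟩ := ‹Nonempty α›
  exact h x ⟨fun b _ => (Subsingleton.elim x b).le, fun b _ => (Subsingleton.elim b x).le⟩

lemma add_mul_choose_mul_mul_le_factorial {s t a b : ℕ} (hs : 2 ≤ s) (ht : 2 ≤ t)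
    (ha : s * a ≤ s !) (hb : t * b ≤ t !) : (s + t) * ((s + t).choose s * a * b) ≤ (s + t)! := by
  refine Nat.le_of_mul_le_mul_left ?_ (by positivity : 0 < s * t)
  calc s * t * ((s + t) * ((s + t).choose s * a * b))
      = (s + t) * (s + t).choose s * (s * a) * (t * b) := by ring
    _ ≤ (s + t) * (s + t).choose s * s ! * t ! := by gcongr
    _ = (s + t) * (s + t)! := by
        rw [← Nat.choose_mul_factorial_mul_factorial (Nat.le_add_right s t),
          Nat.add_sub_cancel_left]
        ring
    _ ≤ s * t * (s + t)! := by gcongr; exact Nat.add_le_mul hs ht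

section NoIsolatedPoint

variable {α : Type*} [Fintype α] [PartialOrder α]

theorem card_mul_extNum_le_factorial_of_connected
    (hconn : ¬ ∃ S : Set α, IsUpperSet S ∧ IsLowerSet S ∧ S.Nonempty ∧ Sᶜ.Nonempty) :
    Fintype.card α * extNum α ≤ (Fintype.card α)! := by
  classical
  set n := Fintype.card α
  rcases Nat.eq_zero_or_pos n with hn | hn
  · simp [hn]
  have : NeZero n := ⟨hn.ne'⟩
  let shift : {f : α ≃ Fin n // ∀ x y, x ≤ y → f x ≤ f y} × Fin n → α ≃ Fin n :=
    fun p => p.1.1.trans (Equiv.addRight p.2)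
  have hshift : Injective shift := by
    rintro ⟨⟨f, hf⟩, k⟩ ⟨⟨g, hg⟩, k'⟩ hfg
    have hpt (x : α) : f x + k = g x + k' := congrArg (· x) hfg
    obtain rfl : k = k' := by
      by_contra hne
      refine hconn (exists_isUpperSet_isLowerSet_of_eq_add (fun x y h => hf x y h)
        (fun x y h => hg x y h) f.surjective (sub_ne_zero.2 hne) fun x => ?_)
      rw [add_sub, hpt, add_sub_cancel_right]
    obtain rfl : f = g := Equiv.ext fun x => add_right_cancel (hpt x)
    rfl
  calc n * extNum α = Nat.card ({f : α ≃ Fin n // ∀ x y, x ≤ y → f x ≤ f y} × Fin n) := by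
        rw [Nat.card_prod, Nat.card_eq_fintype_card (α := Fin n), Fintype.card_fin, mul_comm]
        rfl
    _ ≤ Nat.card (α ≃ Fin n) := Nat.card_le_card_of_injective _ hshift
    _ = n ! := by rw [Nat.card_eq_fintype_card, Fintype.card_equiv (Fintype.equivFin α)]

theorem card_mul_extNum_le_factorial (h : ∀ x : α, ¬ (IsMin x ∧ IsMax x)) :
    Fintype.card α * extNum α ≤ (Fintype.card α)! := by
  induction hN : Fintype.card α using Nat.strong_induction_on generalizing α with
  | _ N ih =>
  by_cases hsplit : ∃ S : Set α, IsUpperSet S ∧ IsLowerSet S ∧ S.Nonempty ∧ Sᶜ.Nonempty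
  · obtain ⟨S, hu, hl, hS, hSc⟩ := hsplit
    classical
    have := hS.to_subtype
    have := hSc.to_subtype
    have hS' : ∀ x : S, ¬ (IsMin x ∧ IsMax x) := fun x hx =>
      h x ⟨isMin_coe_of_isLowerSet hl hx.1, isMax_coe_of_isUpperSet hu hx.2⟩
    have hSc' : ∀ x : ↥Sᶜ, ¬ (IsMin x ∧ IsMax x) := fun x hx =>
      h x ⟨isMin_coe_of_isLowerSet hu.compl hx.1, isMax_coe_of_isUpperSet hl.compl hx.2⟩
    have hs := one_lt_card_of_not_isMin_and_isMax hS'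
    have ht := one_lt_card_of_not_isMin_and_isMax hSc'
    have hst : Fintype.card S + Fintype.card ↥Sᶜ = N := by
      rw [← hN, ← Fintype.card_sum, Fintype.card_congr (Equiv.Set.sumCompl S)]
    rw [extNum_eq_choose_mul hu hl, hN, ← hst]
    exact add_mul_choose_mul_mul_le_factorial hs ht (ih _ (by omega) hS' rfl)
      (ih _ (by omega) hSc' rfl)
  · rw [← hN]
    exact card_mul_extNum_le_factorial_of_connected hsplit

end NoIsolatedPoint

theorem mem_LEset_iff {n m : ℕ} : m ∈ LEset n ↔
    ∃ (β : Type) (_ : Fintype β) (_ : PartialOrder β), Fintype.card β = n ∧ extNum β = m := by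
  constructor
  · rintro ⟨-, r, rfl⟩
    exact ⟨Fin n, inferInstance, r, Fintype.card_fin n, rfl⟩
  · rintro ⟨β, _, _, hβ, rfl⟩
    let e : Fin n ≃ β := (Fintype.equivFinOfCardEq hβ).symm
    let r : PartialOrder (Fin n) := PartialOrder.lift e e.injective
    exact ⟨extNum_pos, r, @extNum_congr (Fin n) β _ r _ _ (@RelIso.mk _ _ _ _ e Iff.rfl)⟩

lemma le_factorial_of_mem_LEset {n m : ℕ} (hm : m ∈ LEset n) : m ≤ n ! := by
  obtain ⟨β, _, _, rfl, rfl⟩ := mem_LEset_iff.1 hm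
  exact extNum_le_factorial

lemma succ_mul_mem_LEset {n m : ℕ} (hm : m ∈ LEset n) : (n + 1) * m ∈ LEset (n + 1) := by
  obtain ⟨β, _, _, rfl, rfl⟩ := mem_LEset_iff.1 hm
  refine mem_LEset_iff.2 ⟨β ⊕ Unit, inferInstance, inferInstance, by simp, ?_⟩
  rw [extNum_sum, extNum_eq_one (α := Unit), Fintype.card_unit, Nat.choose_succ_self_right,
    mul_one]

lemma factorial_succ_div_factorial {r n : ℕ} (hrn : r ≤ n) :
    (n + 1)! / r ! = (n + 1) * (n ! / r !) := by
  rw [Nat.factorial_succ, Nat.mul_div_assoc _ (Nat.factorial_dvd_factorial hrn)]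

lemma factorial_div_mul_mem_LEset {r n ℓ : ℕ} (hrn : r ≤ n) (hℓ : ℓ ∈ LEset r) :
    n ! / r ! * ℓ ∈ LEset n := by
  induction n, hrn using Nat.le_induction with
  | base => rwa [Nat.div_self (Nat.factorial_pos r), one_mul]
  | succ n hrn ih =>
    rw [factorial_succ_div_factorial hrn, mul_assoc]
    exact succ_mul_mem_LEset ih

lemma exists_eq_factorial_div_mul_of_mem_LEset {r n m : ℕ} (hrn : r ≤ n) (hm : m ∈ LEset n)
    (hlt : n ! < (r + 1) * m) : ∃ ℓ ∈ LEset r, m = n ! / r ! * ℓ := by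
  induction n, hrn using Nat.le_induction generalizing m with
  | base => exact ⟨m, hm, by rw [Nat.div_self (Nat.factorial_pos r), one_mul]⟩
  | succ n hrn ih =>
    obtain ⟨β, _, _, hβ, rfl⟩ := mem_LEset_iff.1 hm
    by_cases hiso : ∃ x : β, IsMin x ∧ IsMax x
    · classical
      obtain ⟨x, hmin, hmax⟩ := hiso
      have hcard : Fintype.card ({x}ᶜ : Set β) = n := by
        rw [Fintype.card_compl_set, Set.card_singleton, hβ, Nat.add_sub_cancel]
      rw [extNum_eq_card_mul hmin hmax, hβ] at hlt ⊢
      have hlt' : n ! < (r + 1) * extNum ({x}ᶜ : Set β) := by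
        rw [Nat.factorial_succ] at hlt
        exact Nat.lt_of_mul_lt_mul_left (a := n + 1) (by linarith)
      obtain ⟨ℓ, hℓ, heq⟩ := ih (mem_LEset_iff.2 ⟨_, _, _, hcard, rfl⟩) hlt'
      exact ⟨ℓ, hℓ, by rw [heq, factorial_succ_div_factorial hrn, mul_assoc]⟩
    · have hbound := card_mul_extNum_le_factorial (not_exists.1 hiso)
      rw [hβ] at hbound
      exact absurd (hlt.trans_le (Nat.mul_le_mul_right _ (by omega))) hbound.not_gt

theorem statement8_general (r n : ℕ) (hrn : r < n) :
    {m : ℕ | m ∈ LEset n ∧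
        (Nat.factorial n : ℚ) / ((r : ℚ) + 1) < (m : ℚ) ∧ m ≤ Nat.factorial n}
      = (fun ℓ => Nat.factorial n / Nat.factorial r * ℓ) ''
        {ℓ : ℕ | ℓ ∈ LEset r ∧
          (Nat.factorial r : ℚ) / ((r : ℚ) + 1) < (ℓ : ℚ) ∧ ℓ ≤ Nat.factorial r} := by
  obtain ⟨c, hc⟩ := Nat.factorial_dvd_factorial hrn.le
  have hdiv : n ! / r ! = c := by rw [hc, Nat.mul_div_cancel_left _ (Nat.factorial_pos r)]
  have hc0 : (0 : ℚ) < c := by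
    exact_mod_cast Nat.pos_of_mul_pos_left (hc ▸ Nat.factorial_pos n)
  have hscale (ℓ : ℕ) : (n ! : ℚ) / (r + 1) < (c * ℓ : ℕ) ↔ (r ! : ℚ) / (r + 1) < ℓ := by
    rw [hc]; push_cast; rw [mul_comm, mul_div_assoc, mul_lt_mul_iff_right₀ hc0]
  ext m
  simp only [Set.mem_ofPred_eq, Set.mem_image, hdiv]
  constructor
  · rintro ⟨hm, hlt, -⟩
    have hlt' : n ! < (r + 1) * m := by
      rw [div_lt_iff₀ (by positivity), mul_comm] at hlt
      exact_mod_cast hlt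
    obtain ⟨ℓ, hℓ, rfl⟩ := exists_eq_factorial_div_mul_of_mem_LEset hrn.le hm hlt'
    rw [hdiv] at hlt ⊢
    exact ⟨ℓ, ⟨hℓ, (hscale ℓ).1 hlt, le_factorial_of_mem_LEset hℓ⟩, rfl⟩
  · rintro ⟨ℓ, ⟨hℓ, hlt, -⟩, rfl⟩
    have hmem := factorial_div_mul_mem_LEset hrn.le hℓ
    rw [hdiv] at hmem
    exact ⟨hmem, (hscale ℓ).2 hlt, le_factorial_of_mem_LEset hmem⟩

/-- For `1 ≤ r < n`, the set `LE(n) ∩ (n!/(r+1), n!]` equals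
`{(n!/r!)·ℓ : ℓ ∈ LE(r) ∩ (r!/(r+1), r!]}`. -/
theorem statement8 (r n : ℕ) (hr : 1 ≤ r) (hrn : r < n) :
    {m : ℕ | m ∈ LEset n ∧
        (Nat.factorial n : ℚ) / ((r : ℚ) + 1) < (m : ℚ) ∧ m ≤ Nat.factorial n}
      = (fun ℓ => Nat.factorial n / Nat.factorial r * ℓ) ''
        {ℓ : ℕ | ℓ ∈ LEset r ∧
          (Nat.factorial r : ℚ) / ((r : ℚ) + 1) < (ℓ : ℚ) ∧ ℓ ≤ Nat.factorial r} :=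
  statement8_general r n hrn
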